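/- Let n ≥ 1 and let L ⊆ S be a closed set containing at least three points. Then there exists a constant C > 0, depending only on L, such that for every bijection γ : S → S which admits a multiplier λ : S → (0,∞) (i.e. ‖γx − γy‖ = λ(x)^{1/2} λ(y)^{1/2} ‖x − y‖ for all x,y ∈ S) and which satisfies γ(L) = L, and for every x ∈ S \ L, one has (1/C)·dist(γx, L)/dist(x, L) ≤ λ(x) ≤ C·dist(γx, L)/dist(x, L). (Lemma 1.2: distortion estimate for the conformal derivative |γ′(x)|_s of an element of a nonelementary Kleinian group in terms of distances to the limit set.) -/

import Mathlib

open Real Metric Set Finset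
open scoped RealInnerProductSpace

namespace L12

variable {n : ℕ}

local notation "E'" => EuclideanSpace ℝ (Fin (n+1))
local notation "S'" => Metric.sphere (0 : EuclideanSpace ℝ (Fin (n+1))) 1

lemma norm_coe (z : S') : ‖(z : E')‖ = 1 := by
  have := z.2
  simpa [mem_sphere_iff_norm] using this

/-- the Lorentz-type bilinear form on E × ℝ -/
noncomputable def Bq : (EuclideanSpace ℝ (Fin (n+1)) × ℝ) →ₗ[ℝ] (EuclideanSpace ℝ (Fin (n+1)) × ℝ) →ₗ[ℝ] ℝ :=
  LinearMap.mk₂ ℝ (fun p r => ⟪p.1, r.1⟫ - p.2 * r.2)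
    (by intro m₁ m₂ r; simp [inner_add_left]; ring)
    (by intro c m r; simp [inner_smul_left]; ring)
    (by intro m r₁ r₂; simp [inner_add_right]; ring)
    (by intro c m r; simp [inner_smul_right]; ring)

lemma Bq_apply (p r : EuclideanSpace ℝ (Fin (n+1)) × ℝ) :
    Bq p r = ⟪p.1, r.1⟫ - p.2 * r.2 := rfl

lemma Bq_comm (p r : EuclideanSpace ℝ (Fin (n+1)) × ℝ) : Bq p r = Bq r p := by
  simp [Bq_apply, real_inner_comm, mul_comm]

lemma Bq_nondeg (p : EuclideanSpace ℝ (Fin (n+1)) × ℝ) (h : ∀ r, Bq p r = 0) : p = 0 := by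
  have h1 := h (p.1, 0)
  have h2 := h (0, 1)
  rw [Bq_apply] at h1 h2
  simp only [mul_zero, sub_zero] at h1
  simp only [inner_zero_right, mul_one, zero_sub, neg_eq_zero] at h2
  exact Prod.ext (inner_self_eq_zero.mp h1) h2


/-- the light-cone lift of the graph of γ with its multiplier -/
noncomputable def Zm (γ : S' → S') (lam : S' → ℝ) (z : S') : EuclideanSpace ℝ (Fin (n+1)) × ℝ :=
  ((1 / lam z) • (γ z : E'), 1 / lam z)

noncomputable def lift (z : S') : EuclideanSpace ℝ (Fin (n+1)) × ℝ := ((z : E'), 1)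

lemma Bq_lift (z w : S') : Bq (lift z) (lift w) = ⟪(z : E'), (w : E')⟫ - 1 := by
  simp [lift, Bq_apply]

lemma key_inner (γ : S' → S') (lam : S' → ℝ) (hpos : ∀ x, 0 < lam x)
    (hmul : ∀ x y : S', ‖(γ x : E') - (γ y : E')‖
      = Real.sqrt (lam x) * Real.sqrt (lam y) * ‖(x : E') - (y : E')‖)
    (z w : S') :
    1 - ⟪((γ z : S') : E'), ((γ w : S') : E')⟫ = lam z * lam w * (1 - ⟪(z : E'), (w : E')⟫) := by
  have h := hmul z w
  have hsq : ‖(γ z : E') - (γ w : E')‖ ^ 2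
      = lam z * lam w * ‖(z : E') - (w : E')‖ ^ 2 := by
    rw [h]
    rw [mul_pow, mul_pow, Real.sq_sqrt (hpos z).le, Real.sq_sqrt (hpos w).le]
  have e1 : ‖(γ z : E') - (γ w : E')‖ ^ 2 = 2 - 2 * ⟪((γ z : S') : E'), ((γ w : S') : E')⟫ := by
    rw [norm_sub_sq_real, norm_coe, norm_coe]; ring
  have e2 : ‖(z : E') - (w : E')‖ ^ 2 = 2 - 2 * ⟪(z : E'), (w : E')⟫ := by
    rw [norm_sub_sq_real, norm_coe, norm_coe]; ring
  rw [e1, e2] at hsq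
  linarith

lemma key_Bq (γ : S' → S') (lam : S' → ℝ) (hpos : ∀ x, 0 < lam x)
    (hmul : ∀ x y : S', ‖(γ x : E') - (γ y : E')‖
      = Real.sqrt (lam x) * Real.sqrt (lam y) * ‖(x : E') - (y : E')‖)
    (z w : S') :
    Bq (Zm γ lam z) (Zm γ lam w) = Bq (lift z) (lift w) := by
  have hk := key_inner γ lam hpos hmul z w
  have hz := (hpos z).ne'
  have hw := (hpos w).ne'
  rw [Bq_lift, Zm, Zm, Bq_apply]
  simp only [real_inner_smul_left, real_inner_smul_right]
  have hgz : ⟪((γ z : S') : E'), ((γ w : S') : E')⟫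
      = 1 - lam z * lam w * (1 - ⟪(z : E'), (w : E')⟫) := by linarith
  rw [hgz]
  field_simp
  ring

noncomputable def es (i : Fin (n+1)) : EuclideanSpace ℝ (Fin (n+1)) :=
  EuclideanSpace.single i 1

lemma norm_es (i : Fin (n+1)) : ‖(es i : E')‖ = 1 := by
  simp [es]

noncomputable def sp (i : Fin (n+1)) : S' :=
  ⟨es i, by simp [mem_sphere_iff_norm, norm_es]⟩

noncomputable def spm : S' :=
  ⟨-es 0, by simp [mem_sphere_iff_norm, norm_es]⟩

lemma inner_es (i j : Fin (n+1)) : ⟪(es i : E'), (es j : E')⟫ = if i = j then 1 else 0 := by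
  simp [es, EuclideanSpace.inner_single_left, EuclideanSpace.single_apply]

/-- N vector -/
noncomputable def Nv (γ : S' → S') (lam : S' → ℝ) : EuclideanSpace ℝ (Fin (n+1)) × ℝ :=
  (2:ℝ)⁻¹ • (Zm γ lam (sp 0) + Zm γ lam spm)

/-- Y vectors -/
noncomputable def Yv (γ : S' → S') (lam : S' → ℝ) (i : Fin (n+1)) :
    EuclideanSpace ℝ (Fin (n+1)) × ℝ :=
  Zm γ lam (sp i) - Nv γ lam

lemma coe_sp (i : Fin (n+1)) : ((sp i : S') : E') = es i := rfl
lemma coe_spm : ((spm : S') : E') = -es 0 := rfl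

lemma BZY (γ : S' → S') (lam : S' → ℝ)
    (hK : ∀ z w : S', Bq (Zm γ lam z) (Zm γ lam w) = Bq (lift z) (lift w)) (z : S') (i : Fin (n+1)) :
    Bq (Zm γ lam z) (Yv γ lam i) = ⟪((z : S') : E'), (es i : E')⟫ := by
  simp only [Yv, Nv, map_sub, map_add, map_smul, smul_eq_mul, hK,
    Bq_lift, coe_sp, coe_spm, inner_neg_right]
  ring

lemma BZN (γ : S' → S') (lam : S' → ℝ)
    (hK : ∀ z w : S', Bq (Zm γ lam z) (Zm γ lam w) = Bq (lift z) (lift w)) (z : S') : Bq (Zm γ lam z) (Nv γ lam) = -1 := by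
  simp only [Nv, map_add, map_smul, smul_eq_mul, hK, Bq_lift, coe_sp, coe_spm,
    inner_neg_right]
  ring

lemma BYY (γ : S' → S') (lam : S' → ℝ)
    (hK : ∀ z w : S', Bq (Zm γ lam z) (Zm γ lam w) = Bq (lift z) (lift w)) (i j : Fin (n+1)) :
    Bq (Yv γ lam i) (Yv γ lam j) = if i = j then 1 else 0 := by
  have e1 := BZY (n := n) γ lam hK (sp i) j
  have e2 := BZY (n := n) γ lam hK (sp 0) j
  have e3 := BZY (n := n) γ lam hK spm j
  have egoal : Bq (Yv γ lam i) (Yv γ lam j)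
      = Bq (Zm γ lam (sp i)) (Yv γ lam j)
        - (2:ℝ)⁻¹ * (Bq (Zm γ lam (sp 0)) (Yv γ lam j) + Bq (Zm γ lam spm) (Yv γ lam j)) := by
    simp only [Yv, Nv, map_sub, map_add, map_smul, LinearMap.sub_apply, LinearMap.add_apply,
      LinearMap.smul_apply, smul_eq_mul]
    ring
  rw [egoal, e1, e2, e3]
  simp only [coe_sp, coe_spm, inner_neg_left, inner_es]
  split_ifs <;> ring

lemma BYN (γ : S' → S') (lam : S' → ℝ)
    (hK : ∀ z w : S', Bq (Zm γ lam z) (Zm γ lam w) = Bq (lift z) (lift w)) (i : Fin (n+1)) : Bq (Yv γ lam i) (Nv γ lam) = 0 := by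
  have e1 := BZN (n := n) γ lam hK (sp i)
  have e2 := BZN (n := n) γ lam hK (sp 0)
  have e3 := BZN (n := n) γ lam hK spm
  have egoal : Bq (Yv γ lam i) (Nv γ lam)
      = Bq (Zm γ lam (sp i)) (Nv γ lam)
        - (2:ℝ)⁻¹ * (Bq (Zm γ lam (sp 0)) (Nv γ lam) + Bq (Zm γ lam spm) (Nv γ lam)) := by
    simp only [Yv, Nv, map_sub, map_add, map_smul, LinearMap.sub_apply, LinearMap.add_apply,
      LinearMap.smul_apply, smul_eq_mul]
    ring
  rw [egoal, e1, e2, e3]; ring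

lemma BNY (γ : S' → S') (lam : S' → ℝ)
    (hK : ∀ z w : S', Bq (Zm γ lam z) (Zm γ lam w) = Bq (lift z) (lift w)) (j : Fin (n+1)) : Bq (Nv γ lam) (Yv γ lam j) = 0 := by
  rw [Bq_comm]
  exact BYN γ lam hK j

lemma BNN (γ : S' → S') (lam : S' → ℝ)
    (hK : ∀ z w : S', Bq (Zm γ lam z) (Zm γ lam w) = Bq (lift z) (lift w)) : Bq (Nv γ lam) (Nv γ lam) = -1 := by
  have e2 := BZN (n := n) γ lam hK (sp 0)
  have e3 := BZN (n := n) γ lam hK spm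
  have egoal : Bq (Nv γ lam) (Nv γ lam)
      = (2:ℝ)⁻¹ * (Bq (Zm γ lam (sp 0)) (Nv γ lam) + Bq (Zm γ lam spm) (Nv γ lam)) := by
    simp only [Nv, map_add, map_smul, LinearMap.add_apply, LinearMap.smul_apply, smul_eq_mul]
    rw [show (Bq (Zm γ lam spm)) (Zm γ lam (sp 0)) = (Bq (Zm γ lam (sp 0))) (Zm γ lam spm) from
      Bq_comm _ _]
  rw [egoal, e2, e3]; ring

lemma euclid_decomp (v : EuclideanSpace ℝ (Fin (n+1))) : ∑ i, v i • es i = v := by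
  have h := (EuclideanSpace.basisFun (Fin (n+1)) ℝ).sum_repr v
  simp only [EuclideanSpace.basisFun_repr, EuclideanSpace.basisFun_apply] at h
  simpa [es] using h

lemma inner_euclid (v w : EuclideanSpace ℝ (Fin (n+1))) : ⟪(v : E'), (w : E')⟫ = ∑ i, v i * w i := by
  simp [PiLp.inner_apply]
  exact Finset.sum_congr rfl (fun i _ => mul_comm _ _)

noncomputable def Tmap (γ : S' → S') (lam : S' → ℝ) :
    (EuclideanSpace ℝ (Fin (n+1)) × ℝ) →ₗ[ℝ] (EuclideanSpace ℝ (Fin (n+1)) × ℝ) where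
  toFun p := (∑ i, p.1 i • Yv γ lam i) + p.2 • Nv γ lam
  map_add' p q := by
    simp only [Prod.fst_add, Prod.snd_add, PiLp.add_apply, add_smul, Finset.sum_add_distrib]
    abel
  map_smul' c p := by
    simp only [Prod.smul_fst, Prod.smul_snd, PiLp.smul_apply, smul_eq_mul, RingHom.id_apply,
      smul_smul, smul_add, Finset.smul_sum]

lemma Tmap_apply (γ : S' → S') (lam : S' → ℝ) (p : EuclideanSpace ℝ (Fin (n+1)) × ℝ) :
    Tmap γ lam p = (∑ i, p.1 i • Yv γ lam i) + p.2 • Nv γ lam := rfl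

lemma BZT (γ : S' → S') (lam : S' → ℝ)
    (hK : ∀ z w : S', Bq (Zm γ lam z) (Zm γ lam w) = Bq (lift z) (lift w))
    (z : S') (p : EuclideanSpace ℝ (Fin (n+1)) × ℝ) :
    Bq (Zm γ lam z) (Tmap γ lam p) = ⟪((z : S') : E'), p.1⟫ - p.2 := by
  rw [Tmap_apply, map_add, map_sum]
  simp only [map_smul, smul_eq_mul]
  rw [BZN γ lam hK z]
  have : ∀ i, Bq (Zm γ lam z) (Yv γ lam i) = ⟪((z : S') : E'), (es i : E')⟫ :=
    fun i => BZY (n := n) γ lam hK z i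
  simp only [this]
  have : ∑ i, p.1 i * ⟪((z : S') : E'), (es i : E')⟫ = ⟪((z : S') : E'), p.1⟫ := by
    conv_rhs => rw [← euclid_decomp p.1]
    rw [inner_sum]
    simp [inner_smul_right, mul_comm]
  rw [this]
  try ring

lemma BYT (γ : S' → S') (lam : S' → ℝ)
    (hK : ∀ z w : S', Bq (Zm γ lam z) (Zm γ lam w) = Bq (lift z) (lift w))
    (i : Fin (n+1)) (r : EuclideanSpace ℝ (Fin (n+1)) × ℝ) :
    Bq (Yv γ lam i) (Tmap γ lam r) = r.1 i := by
  rw [Tmap_apply, map_add, map_sum]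
  simp only [map_smul, smul_eq_mul]
  rw [BYN γ lam hK i]
  have : ∀ j, Bq (Yv γ lam i) (Yv γ lam j) = if i = j then (1:ℝ) else 0 :=
    fun j => BYY (n := n) γ lam hK i j
  simp only [this, mul_ite, mul_one, mul_zero]
  simp [Finset.sum_ite_eq]

lemma BNT (γ : S' → S') (lam : S' → ℝ)
    (hK : ∀ z w : S', Bq (Zm γ lam z) (Zm γ lam w) = Bq (lift z) (lift w))
    (r : EuclideanSpace ℝ (Fin (n+1)) × ℝ) :
    Bq (Nv γ lam) (Tmap γ lam r) = -r.2 := by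
  rw [Tmap_apply, map_add, map_sum]
  simp only [map_smul, smul_eq_mul]
  rw [BNN γ lam hK]
  have : ∀ j, Bq (Nv γ lam) (Yv γ lam j) = (0:ℝ) := fun j => BNY (n := n) γ lam hK j
  simp [this]

lemma BTT (γ : S' → S') (lam : S' → ℝ)
    (hK : ∀ z w : S', Bq (Zm γ lam z) (Zm γ lam w) = Bq (lift z) (lift w))
    (p r : EuclideanSpace ℝ (Fin (n+1)) × ℝ) :
    Bq (Tmap γ lam p) (Tmap γ lam r) = Bq p r := by
  conv_lhs => rw [Tmap_apply]
  rw [map_add, map_sum]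
  simp only [LinearMap.add_apply, LinearMap.sum_apply, map_smul, LinearMap.smul_apply,
    smul_eq_mul]
  rw [BNT γ lam hK r]
  have : ∀ i, Bq (Yv γ lam i) (Tmap γ lam r) = r.1 i := fun i => BYT (n := n) γ lam hK i r
  simp only [this]
  rw [Bq_apply, inner_euclid]
  ring

lemma Tmap_inj (γ : S' → S') (lam : S' → ℝ)
    (hK : ∀ z w : S', Bq (Zm γ lam z) (Zm γ lam w) = Bq (lift z) (lift w)) :
    Function.Injective (Tmap γ lam) := by
  intro p r hpr
  have h : ∀ u, Bq (p - r) u = 0 := by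
    intro u
    have : Bq (Tmap γ lam (p - r)) (Tmap γ lam u) = Bq (p - r) u := BTT γ lam hK _ _
    rw [map_sub, hpr, sub_self] at this
    rw [← this]
    simp
  exact sub_eq_zero.mp (Bq_nondeg _ h)

lemma Tmap_surjective (γ : S' → S') (lam : S' → ℝ)
    (hK : ∀ z w : S', Bq (Zm γ lam z) (Zm γ lam w) = Bq (lift z) (lift w)) :
    Function.Surjective (Tmap γ lam) :=
  (LinearMap.injective_iff_surjective).mp (Tmap_inj γ lam hK)

lemma Zm_eq_Tmap (γ : S' → S') (lam : S' → ℝ)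
    (hK : ∀ z w : S', Bq (Zm γ lam z) (Zm γ lam w) = Bq (lift z) (lift w))
    (z : S') : Zm γ lam z = Tmap γ lam (lift z) := by
  have h : ∀ u, Bq (Zm γ lam z - Tmap γ lam (lift z)) u = 0 := by
    intro u
    obtain ⟨r, rfl⟩ := Tmap_surjective γ lam hK u
    rw [map_sub, LinearMap.sub_apply, BZT γ lam hK z r, BTT γ lam hK (lift z) r]
    rw [Bq_apply, lift]
    ring
  exact sub_eq_zero.mp (Bq_nondeg _ h)

lemma affine_exists (γ : S' → S') (lam : S' → ℝ) (hpos : ∀ x, 0 < lam x)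
    (hmul : ∀ x y : S', ‖(γ x : E') - (γ y : E')‖
      = Real.sqrt (lam x) * Real.sqrt (lam y) * ‖(x : E') - (y : E')‖) :
    ∃ (A : ℝ) (b : EuclideanSpace ℝ (Fin (n+1))), ∀ z : S',
      1 / lam z = A + ⟪(b : E'), ((z : S') : E')⟫ := by
  have hK := key_Bq γ lam hpos hmul
  refine ⟨(Nv γ lam).2, (WithLp.equiv 2 _).symm (fun i => (Yv γ lam i).2), fun z => ?_⟩
  have h := congrArg Prod.snd (Zm_eq_Tmap γ lam hK z)
  rw [Zm] at h
  simp only at h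
  rw [h, Tmap_apply]
  rw [inner_euclid]
  have : ∀ i, ((WithLp.equiv 2 (Fin (n+1) → ℝ)).symm (fun i => (Yv γ lam i).2) : E') i
      = (Yv γ lam i).2 := fun i => rfl
  simp only [this]
  simp only [Prod.snd_add, Prod.snd_sum, Prod.smul_snd, smul_eq_mul, lift, one_smul]
  ring_nf
  rw [Finset.sum_congr rfl (fun i _ => mul_comm ((z : E') i) ((Yv γ lam i).2))]
  ring

lemma form_exists (γ : S' → S') (lam : S' → ℝ) (hpos : ∀ x, 0 < lam x)
    (hmul : ∀ x y : S', ‖(γ x : E') - (γ y : E')‖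
      = Real.sqrt (lam x) * Real.sqrt (lam y) * ‖(x : E') - (y : E')‖) :
    (∃ cst : ℝ, ∀ z : S', lam z = cst) ∨
    (∃ (q : EuclideanSpace ℝ (Fin (n+1))) (eps : ℝ), 0 < eps ∧
      ∀ z : S', lam z = eps / ‖((z : S') : E') - q‖ ^ 2) := by
  obtain ⟨A, b, hab⟩ := affine_exists γ lam hpos hmul
  by_cases hb : b = 0
  · left
    refine ⟨A⁻¹, fun z => ?_⟩
    have h := hab z
    rw [hb] at h
    simp only [inner_zero_left, add_zero] at h
    have hz := (hpos z).ne'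
    field_simp at h
    have hA : A ≠ 0 := by
      intro h0
      rw [h0] at h
      simp at h
    field_simp
    linear_combination -h
  · right
    have hbpos : 0 < ‖b‖ := norm_pos_iff.mpr hb
    have hzb : (-(‖b‖⁻¹ • b) : EuclideanSpace ℝ (Fin (n+1))) ∈ Metric.sphere (0 : E') 1 := by
      simp [norm_smul, abs_of_nonneg (inv_nonneg.mpr hbpos.le), inv_mul_cancel₀ hbpos.ne']
    set zb : S' := ⟨-(‖b‖⁻¹ • b), hzb⟩ with hzbdef
    have h1 : 1 / lam zb = A - ‖b‖ := by
      rw [hab zb]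
      have : ⟪(b : E'), ((zb : S') : E')⟫ = -‖b‖ := by
        show ⟪(b : E'), (-(‖b‖⁻¹ • b) : E')⟫ = -‖b‖
        rw [inner_neg_right, real_inner_smul_right, real_inner_self_eq_norm_sq]
        field_simp
      rw [this]
      ring
    have hA : ‖b‖ < A := by
      have h2 : 0 < 1 / lam zb := one_div_pos.mpr (hpos zb)
      rw [h1] at h2
      linarith
    have hdisc : 0 ≤ A^2 - ‖b‖^2 := by nlinarith
    set sd := Real.sqrt (A^2 - ‖b‖^2) with hsddef
    have hsd : sd^2 = A^2 - ‖b‖^2 := Real.sq_sqrt hdisc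
    have hsdnn : 0 ≤ sd := Real.sqrt_nonneg _
    set c := (A + sd)/2 with hcdef
    have hc : 0 < c := by
      have : 0 < A := lt_of_le_of_lt (norm_nonneg b) hA
      positivity
    have hcq : 4*c^2 - 4*A*c + ‖b‖^2 = 0 := by
      rw [hcdef]
      field_simp
      nlinarith [hsd]
    refine ⟨(-(2*c)⁻¹) • b, c⁻¹, inv_pos.mpr hc, fun z => ?_⟩
    have hq : c * ‖((z : S') : E') - (-(2*c)⁻¹) • b‖^2 = A + ⟪(b : E'), ((z : S') : E')⟫ := by
      rw [norm_sub_sq_real, norm_coe]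
      rw [real_inner_smul_right, norm_smul]
      rw [real_inner_comm]
      have habs : ‖(-(2*c)⁻¹ : ℝ)‖ = (2*c)⁻¹ := by
        rw [Real.norm_eq_abs, abs_neg, abs_of_nonneg]
        positivity
      rw [habs]
      rw [mul_pow]
      field_simp
      nlinarith [hcq, real_inner_comm (b : E') ((z : S') : E')]
    have h2 : 1 / lam z = c * ‖((z : S') : E') - (-(2*c)⁻¹) • b‖^2 := (hab z).trans hq.symm
    have hz := (hpos z).ne'
    have hXpos : 0 < ‖((z : S') : E') - (-(2*c)⁻¹) • b‖^2 := by
      nlinarith [hpos z, h2, one_div_pos.mpr (hpos z)]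
    rw [eq_div_iff hXpos.ne']
    have h3 : c * ‖((z : S') : E') - (-(2*c)⁻¹) • b‖^2 * lam z = 1 := by
      rw [← h2]
      field_simp
    rw [inv_eq_one_div c, eq_div_iff hc.ne']
    linear_combination h3

set_option maxHeartbeats 2000000 in
lemma exists_w (L : Set (Metric.sphere (0 : EuclideanSpace ℝ (Fin (n+1))) 1))
    (a0 b0 : S') (ha : a0 ∈ L) (hb : b0 ∈ L) (hab0 : ((a0 : S') : E') ≠ ((b0 : S') : E'))
    (lam : S' → ℝ) (hpos : ∀ x, 0 < lam x)
    (hform : (∃ cst : ℝ, ∀ z : S', lam z = cst) ∨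
      (∃ (q : EuclideanSpace ℝ (Fin (n+1))) (eps : ℝ), 0 < eps ∧
        ∀ z : S', lam z = eps / ‖((z : S') : E') - q‖ ^ 2))
    (x : S') (hd : 0 < Metric.infDist x L) :
    ∃ w ∈ L, Real.sqrt (lam w) * ‖((x : S') : E') - ((w : S') : E')‖
      ≤ (max 8 (72 / ‖((a0 : S') : E') - ((b0 : S') : E')‖))
          * (Real.sqrt (lam x) * Metric.infDist x L) := by
  set d := Metric.infDist x L with hddef
  set s := ‖((a0 : S') : E') - ((b0 : S') : E')‖ with hsdef
  set C := max 8 (72 / s) with hCdef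
  have hs : 0 < s := by
    rw [hsdef]
    exact norm_sub_pos_iff.mpr hab0
  have hC8 : (8:ℝ) ≤ C := le_max_left _ _
  have hC72 : 72 / s ≤ C := le_max_right _ _
  have hCs : 72 ≤ C * s := (div_le_iff₀ hs).mp hC72
  have hLne : L.Nonempty := ⟨a0, ha⟩
  obtain ⟨y, hy, hxy⟩ := (Metric.infDist_lt_iff hLne).mp (show d < 2*d by linarith)
  have hxy' : ‖((x : S') : E') - ((y : S') : E')‖ < 2*d := by
    rwa [Subtype.dist_eq, dist_eq_norm] at hxy
  have hd2 : d ≤ 2 := by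
    have h1 : d ≤ dist x a0 := Metric.infDist_le_dist_of_mem ha
    rw [Subtype.dist_eq, dist_eq_norm] at h1
    have h2 : ‖((x : S') : E') - ((a0 : S') : E')‖ ≤ 2 := by
      calc ‖((x : S') : E') - ((a0 : S') : E')‖ ≤ ‖((x : S') : E')‖ + ‖((a0 : S') : E')‖ :=
        norm_sub_le _ _
      _ = 2 := by rw [norm_coe, norm_coe]; norm_num
    linarith
  clear_value d s C
  rcases hform with ⟨cst, hconst⟩ | ⟨q, eps, heps, hf⟩
  · refine ⟨y, hy, ?_⟩
    rw [hconst y, hconst x]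
    have h1 : ‖((x : S') : E') - ((y : S') : E')‖ ≤ C * d := by nlinarith
    nlinarith [Real.sqrt_nonneg cst, hd]
  · -- distance to the pole
    have hrpos : ∀ z : S', 0 < ‖((z : S') : E') - q‖ := by
      intro z
      rcases eq_or_lt_of_le (norm_nonneg (((z : S') : E') - q)) with h | h
      · exfalso
        have := hf z
        rw [← h] at this
        simp at this
        exact (hpos z).ne' (by rw [this])
      · exact h
    have hsqrt : ∀ z : S', Real.sqrt (lam z)
        = Real.sqrt eps / ‖((z : S') : E') - q‖ := by
      intro z
      rw [hf z, Real.sqrt_div heps.le, Real.sqrt_sq (norm_nonneg _)]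
    have key : ∃ w ∈ L, ‖((x : S') : E') - ((w : S') : E')‖ * ‖((x : S') : E') - q‖
        ≤ C * d * ‖((w : S') : E') - q‖ := by
      by_cases h1 : ‖((x : S') : E') - q‖ ≤ 4 * ‖((y : S') : E') - q‖
      · refine ⟨y, hy, ?_⟩
        have m1 : ‖((x : S') : E') - ((y : S') : E')‖ * ‖((x : S') : E') - q‖
            ≤ (2*d) * (4 * ‖((y : S') : E') - q‖) :=
          mul_le_mul hxy'.le h1 (norm_nonneg _) (by positivity)
        have m2 : 0 ≤ (C - 8) * (d * ‖((y : S') : E') - q‖) :=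
          mul_nonneg (by linarith) (mul_nonneg hd.le (hrpos y).le)
        nlinarith [m1, m2]
      · push_neg at h1
        have tri : ‖((x : S') : E') - q‖
            ≤ ‖((x : S') : E') - ((y : S') : E')‖ + ‖((y : S') : E') - q‖ :=
          norm_sub_le_norm_sub_add_norm_sub _ _ _
        have hx3 : ‖((x : S') : E') - q‖ ≤ 3 * d := by
          have := hrpos y
          linarith
        by_cases h2 : 6 * d ≤ ‖((x : S') : E') - ((a0 : S') : E')‖
        · refine ⟨a0, ha, ?_⟩
          have tri2 : ‖((x : S') : E') - ((a0 : S') : E')‖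
              ≤ ‖((x : S') : E') - q‖ + ‖q - ((a0 : S') : E')‖ :=
            norm_sub_le_norm_sub_add_norm_sub _ _ _
          rw [norm_sub_rev q] at tri2
          have hA2 : ‖((x : S') : E') - ((a0 : S') : E')‖ ≤ 2 * ‖((a0 : S') : E') - q‖ := by
            linarith
          have hA1 : ‖((x : S') : E') - ((a0 : S') : E')‖ * ‖((x : S') : E') - q‖
              ≤ ‖((x : S') : E') - ((a0 : S') : E')‖ * (3*d) :=
            mul_le_mul_of_nonneg_left hx3 (norm_nonneg _)
          have hA3 : ‖((x : S') : E') - ((a0 : S') : E')‖ * (3*d)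
              ≤ (2 * ‖((a0 : S') : E') - q‖) * (3*d) :=
            mul_le_mul_of_nonneg_right hA2 (by linarith)
          have m2 : 0 ≤ (C - 8) * (d * ‖((a0 : S') : E') - q‖) :=
            mul_nonneg (by linarith) (mul_nonneg hd.le (hrpos a0).le)
          nlinarith [hA1, hA3, m2]
        · by_cases h3 : 6 * d ≤ ‖((x : S') : E') - ((b0 : S') : E')‖
          · refine ⟨b0, hb, ?_⟩
            have tri2 : ‖((x : S') : E') - ((b0 : S') : E')‖
                ≤ ‖((x : S') : E') - q‖ + ‖q - ((b0 : S') : E')‖ :=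
              norm_sub_le_norm_sub_add_norm_sub _ _ _
            rw [norm_sub_rev q] at tri2
            have hA2 : ‖((x : S') : E') - ((b0 : S') : E')‖ ≤ 2 * ‖((b0 : S') : E') - q‖ := by
              linarith
            have hA1 : ‖((x : S') : E') - ((b0 : S') : E')‖ * ‖((x : S') : E') - q‖
                ≤ ‖((x : S') : E') - ((b0 : S') : E')‖ * (3*d) :=
              mul_le_mul_of_nonneg_left hx3 (norm_nonneg _)
            have hA3 : ‖((x : S') : E') - ((b0 : S') : E')‖ * (3*d)
                ≤ (2 * ‖((b0 : S') : E') - q‖) * (3*d) :=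
              mul_le_mul_of_nonneg_right hA2 (by linarith)
            have m2 : 0 ≤ (C - 8) * (d * ‖((b0 : S') : E') - q‖) :=
              mul_nonneg (by linarith) (mul_nonneg hd.le (hrpos b0).le)
            nlinarith [hA1, hA3, m2]
          · push_neg at h2 h3
            have hs12 : s ≤ ‖((a0 : S') : E') - ((x : S') : E')‖
                + ‖((x : S') : E') - ((b0 : S') : E')‖ := by
              rw [hsdef]; exact norm_sub_le_norm_sub_add_norm_sub _ _ _
            rw [norm_sub_rev ((a0 : S') : E')] at hs12
            have tri3 : s ≤ ‖((a0 : S') : E') - q‖ + ‖q - ((b0 : S') : E')‖ := by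
              rw [hsdef]; exact norm_sub_le_norm_sub_add_norm_sub _ _ _
            rw [norm_sub_rev q] at tri3
            by_cases h4 : s/2 ≤ ‖((a0 : S') : E') - q‖
            · refine ⟨a0, ha, ?_⟩
              have hB1 : ‖((x : S') : E') - ((a0 : S') : E')‖ * ‖((x : S') : E') - q‖
                  ≤ (6*d) * (3*d) :=
                mul_le_mul h2.le hx3 (norm_nonneg _) (by linarith)
              have hB2 : (6*d) * (3*d) ≤ 36*d := by nlinarith
              have hB3 : C * d * (s/2) ≤ C * d * ‖((a0 : S') : E') - q‖ :=
                mul_le_mul_of_nonneg_left h4 (mul_nonneg (by linarith) hd.le)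
              have hB4 : 72 * d ≤ C * s * d := mul_le_mul_of_nonneg_right hCs hd.le
              nlinarith [hB1, hB2, hB3, hB4]
            · push_neg at h4
              have h5 : s/2 ≤ ‖((b0 : S') : E') - q‖ := by linarith
              refine ⟨b0, hb, ?_⟩
              have hB1 : ‖((x : S') : E') - ((b0 : S') : E')‖ * ‖((x : S') : E') - q‖
                  ≤ (6*d) * (3*d) :=
                mul_le_mul h3.le hx3 (norm_nonneg _) (by linarith)
              have hB2 : (6*d) * (3*d) ≤ 36*d := by nlinarith
              have hB3 : C * d * (s/2) ≤ C * d * ‖((b0 : S') : E') - q‖ :=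
                mul_le_mul_of_nonneg_left h5 (mul_nonneg (by linarith) hd.le)
              have hB4 : 72 * d ≤ C * s * d := mul_le_mul_of_nonneg_right hCs hd.le
              nlinarith [hB1, hB2, hB3, hB4]
    obtain ⟨w, hw, hkey⟩ := key
    refine ⟨w, hw, ?_⟩
    rw [hsqrt w, hsqrt x]
    have hrw := hrpos w
    have hrx := hrpos x
    have hse : (0:ℝ) ≤ Real.sqrt eps := Real.sqrt_nonneg _
    have goal' : (Real.sqrt eps * ‖((x : S') : E') - ((w : S') : E')‖) / ‖((w : S') : E') - q‖
        ≤ (C * (Real.sqrt eps * d)) / ‖((x : S') : E') - q‖ := by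
      rw [div_le_div_iff₀ hrw hrx]
      nlinarith [mul_le_mul_of_nonneg_left hkey hse]
    calc Real.sqrt eps / ‖((w : S') : E') - q‖ * ‖((x : S') : E') - ((w : S') : E')‖
        = (Real.sqrt eps * ‖((x : S') : E') - ((w : S') : E')‖) / ‖((w : S') : E') - q‖ := by
          ring
      _ ≤ (C * (Real.sqrt eps * d)) / ‖((x : S') : E') - q‖ := goal'
      _ = C * (Real.sqrt eps / ‖((x : S') : E') - q‖ * d) := by ring

lemma half (L : Set (Metric.sphere (0 : EuclideanSpace ℝ (Fin (n+1))) 1))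
    (a0 b0 : S') (ha : a0 ∈ L) (hb : b0 ∈ L) (hab0 : ((a0 : S') : E') ≠ ((b0 : S') : E'))
    (γ : S' → S') (lam : S' → ℝ) (hpos : ∀ x, 0 < lam x)
    (hmul : ∀ x y : S', ‖(γ x : E') - (γ y : E')‖
      = Real.sqrt (lam x) * Real.sqrt (lam y) * ‖(x : E') - (y : E')‖)
    (hγL : γ '' L = L)
    (x : S') (hd : 0 < Metric.infDist x L) :
    Metric.infDist (γ x) L ≤ (max 8 (72 / ‖((a0 : S') : E') - ((b0 : S') : E')‖))
      * (lam x * Metric.infDist x L) := by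
  obtain ⟨w, hw, hwle⟩ :=
    exists_w L a0 b0 ha hb hab0 lam hpos (form_exists γ lam hpos hmul) x hd
  have hγw : γ w ∈ L := by
    rw [← hγL]
    exact ⟨w, hw, rfl⟩
  have h1 : Metric.infDist (γ x) L ≤ dist (γ x) (γ w) := Metric.infDist_le_dist_of_mem hγw
  rw [Subtype.dist_eq, dist_eq_norm, hmul x w] at h1
  have h3 : Real.sqrt (lam x) * Real.sqrt (lam x) = lam x := Real.mul_self_sqrt (hpos x).le
  calc Metric.infDist (γ x) L
      ≤ Real.sqrt (lam x) * Real.sqrt (lam w) * ‖((x : S') : E') - ((w : S') : E')‖ := h1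
    _ = Real.sqrt (lam x) * (Real.sqrt (lam w) * ‖((x : S') : E') - ((w : S') : E')‖) := by
        ring
    _ ≤ Real.sqrt (lam x) * ((max 8 (72 / ‖((a0 : S') : E') - ((b0 : S') : E')‖))
          * (Real.sqrt (lam x) * Metric.infDist x L)) :=
        mul_le_mul_of_nonneg_left hwle (Real.sqrt_nonneg _)
    _ = (max 8 (72 / ‖((a0 : S') : E') - ((b0 : S') : E')‖))
          * (Real.sqrt (lam x) * Real.sqrt (lam x) * Metric.infDist x L) := by ring
    _ = (max 8 (72 / ‖((a0 : S') : E') - ((b0 : S') : E')‖))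
          * (lam x * Metric.infDist x L) := by rw [h3]

end L12


/-- Lemma 1.2: distortion estimate for the spherical conformal derivative of a
Möbius transformation preserving the limit set `L`, in terms of distances to `L`.
`S` is the unit sphere of `EuclideanSpace ℝ (n+1)` with the chordal distance,
and `λ` is the multiplier of `γ`, i.e. `|γ′(x)|_s`. -/
theorem lemma_1_2 (n : ℕ) (hn : 1 ≤ n)
    (L : Set (Metric.sphere (0 : EuclideanSpace ℝ (Fin (n + 1))) 1))
    (hLclosed : IsClosed L)
    (hL3 : ∃ a b c, a ∈ L ∧ b ∈ L ∧ c ∈ L ∧ a ≠ b ∧ a ≠ c ∧ b ≠ c) :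
    ∃ C > (0 : ℝ),
      ∀ γ : Metric.sphere (0 : EuclideanSpace ℝ (Fin (n + 1))) 1 →
            Metric.sphere (0 : EuclideanSpace ℝ (Fin (n + 1))) 1,
        Function.Bijective γ →
        ∀ lam : Metric.sphere (0 : EuclideanSpace ℝ (Fin (n + 1))) 1 → ℝ,
          (∀ x, 0 < lam x) →
          (∀ x y, ‖(γ x : EuclideanSpace ℝ (Fin (n + 1))) - (γ y : EuclideanSpace ℝ (Fin (n + 1)))‖
              = Real.sqrt (lam x) * Real.sqrt (lam y)
                * ‖(x : EuclideanSpace ℝ (Fin (n + 1))) - (y : EuclideanSpace ℝ (Fin (n + 1)))‖) →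
          γ '' L = L →
          ∀ x, x ∉ L →
            (1 / C) * (Metric.infDist (γ x) L / Metric.infDist x L) ≤ lam x ∧
            lam x ≤ C * (Metric.infDist (γ x) L / Metric.infDist x L) := by
  obtain ⟨a, b, c, ha, hb, hc, hab, hac, hbc⟩ := hL3
  have hab0 : ((a : Metric.sphere (0 : EuclideanSpace ℝ (Fin (n + 1))) 1)
      : EuclideanSpace ℝ (Fin (n + 1)))
      ≠ ((b : Metric.sphere (0 : EuclideanSpace ℝ (Fin (n + 1))) 1)
      : EuclideanSpace ℝ (Fin (n + 1))) := fun h => hab (Subtype.coe_injective h)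
  set C := max (8:ℝ) (72 / ‖((a : Metric.sphere (0 : EuclideanSpace ℝ (Fin (n + 1))) 1)
      : EuclideanSpace ℝ (Fin (n + 1)))
      - ((b : Metric.sphere (0 : EuclideanSpace ℝ (Fin (n + 1))) 1)
      : EuclideanSpace ℝ (Fin (n + 1)))‖) with hCdef
  have hC : (0:ℝ) < C := lt_of_lt_of_le (by norm_num) (le_max_left _ _)
  refine ⟨C, hC, ?_⟩
  intro γ hγ lam hpos hmul hγL x hx
  have hLne : L.Nonempty := ⟨a, ha⟩
  have hd : 0 < Metric.infDist x L := (hLclosed.notMem_iff_infDist_pos hLne).mp hx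
  have hγx : γ x ∉ L := by
    intro hmem
    rw [← hγL] at hmem
    obtain ⟨x', hx', hxx⟩ := hmem
    exact hx ((hγ.injective hxx) ▸ hx')
  have hD : 0 < Metric.infDist (γ x) L := (hLclosed.notMem_iff_infDist_pos hLne).mp hγx
  have h1 := L12.half L a b ha hb hab0 γ lam hpos hmul hγL x hd
  -- inverse map
  set e := Equiv.ofBijective γ hγ with hedef
  set lam' : Metric.sphere (0 : EuclideanSpace ℝ (Fin (n + 1))) 1 → ℝ :=
    fun z => (lam (e.symm z))⁻¹ with hlam'def
  have hpos' : ∀ z, 0 < lam' z := fun z => inv_pos.mpr (hpos _)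
  have hmul' : ∀ u v : Metric.sphere (0 : EuclideanSpace ℝ (Fin (n + 1))) 1,
      ‖((e.symm u : Metric.sphere (0 : EuclideanSpace ℝ (Fin (n + 1))) 1)
          : EuclideanSpace ℝ (Fin (n + 1)))
        - ((e.symm v : Metric.sphere (0 : EuclideanSpace ℝ (Fin (n + 1))) 1)
          : EuclideanSpace ℝ (Fin (n + 1)))‖
      = Real.sqrt (lam' u) * Real.sqrt (lam' v)
        * ‖((u : Metric.sphere (0 : EuclideanSpace ℝ (Fin (n + 1))) 1)
            : EuclideanSpace ℝ (Fin (n + 1)))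
          - ((v : Metric.sphere (0 : EuclideanSpace ℝ (Fin (n + 1))) 1)
            : EuclideanSpace ℝ (Fin (n + 1)))‖ := by
    intro u v
    have h := hmul (e.symm u) (e.symm v)
    rw [show γ (e.symm u) = u from e.apply_symm_apply u,
      show γ (e.symm v) = v from e.apply_symm_apply v] at h
    have hsu : 0 < Real.sqrt (lam (e.symm u)) := Real.sqrt_pos.mpr (hpos _)
    have hsv : 0 < Real.sqrt (lam (e.symm v)) := Real.sqrt_pos.mpr (hpos _)
    rw [hlam'def]
    simp only [Real.sqrt_inv]
    rw [h]
    field_simp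
  have hγ'L : (⇑e.symm) '' L = L := by
    conv_lhs => rw [← hγL]
    exact Equiv.symm_image_image e L
  have h2 := L12.half L a b ha hb hab0 (⇑e.symm) lam' hpos' hmul' hγ'L (γ x) hD
  rw [show e.symm (γ x) = x from e.symm_apply_apply x] at h2
  have hlamγx : lam' (γ x) = (lam x)⁻¹ := by
    rw [hlam'def]
    simp only
    rw [show e.symm (γ x) = x from e.symm_apply_apply x]
  rw [hlamγx] at h2
  have hlx := hpos x
  constructor
  · have hq1 : Metric.infDist (γ x) L / Metric.infDist x L ≤ C * lam x := by
      rw [div_le_iff₀ hd]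
      nlinarith [h1]
    have hmono := mul_le_mul_of_nonneg_left hq1 (le_of_lt (one_div_pos.mpr hC))
    calc (1/C) * (Metric.infDist (γ x) L / Metric.infDist x L)
        ≤ (1/C) * (C * lam x) := hmono
      _ = lam x := by field_simp
  · have h2' : lam x * Metric.infDist x L ≤ C * Metric.infDist (γ x) L := by
      have h3 := mul_le_mul_of_nonneg_left h2 (hpos x).le
      have h4 : lam x * (C * ((lam x)⁻¹ * Metric.infDist (γ x) L))
          = C * Metric.infDist (γ x) L := by
        field_simp
      linarith [h4 ▸ h3]
    rw [show C * (Metric.infDist (γ x) L / Metric.infDist x L)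
        = (C * Metric.infDist (γ x) L) / Metric.infDist x L from by ring,
      le_div_iff₀ hd]
    linarith [h2']
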